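/- Let h_1,…,h_N be Hermitian d×d complex matrices with H = ∑_{l=1}^N h_l and λ = ∑_{l=1}^N ‖h_l‖ (operator norm). Let j ≥ 1 and m ≥ 1 be integers, and define f : ℝ → M_d(ℂ) by f(Δ) := U_2(Δ/j)^j − exp(−iΔH), where U_2(δ) = (∏_{l=1}^{N} exp(−i h_l δ/2))·(∏_{l=N}^{1} exp(−i h_l δ/2)). Then for every real Δ, the degree-2m Taylor remainder of f at 0 satisfies ‖f(Δ) − ∑_{n=0}^{2m} (Δⁿ/n!) · f^{(n)}(0)‖ ≤ (2·(λ|Δ|)^{2m+1} / (2m+1)!) · e^{λ|Δ|}. -/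

import Mathlib

/-!
Each factor `exp (-i δ hₗ / 2)` of `U₂ (Δ / j)` is an entire function of `Δ` whose `n`-th Taylor
coefficient has norm at most `(‖hₗ‖ / 2j)ⁿ / n!`. By the binomial theorem such exponential
coefficient bounds multiply along Cauchy products, so `U₂ (Δ / j) ^ j` and `exp (-i Δ H)` both have
`n`-th coefficients of norm at most `λⁿ / n!`, and those of `f` at most `2 λⁿ / n!`. The Taylor
remainder of `f` is the tail of its power series, bounded termwise by the tail of `2 e^{λ|Δ|}`, and
`∑_{n ≥ K} xⁿ / n! ≤ xᴷ / K! · eˣ` because `K! n! ≤ (n + K)!`.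
-/

open scoped Matrix.Norms.L2Operator

/-- The symmetric second-order Trotter product formula
`U₂ δ = (∏_{l=1}^{N} exp (-i h l δ / 2)) * (∏_{l=N}^{1} exp (-i h l δ / 2))`,
the second product taken in reversed order. -/
noncomputable def U2 {d N : ℕ} (h : Fin N → Matrix (Fin d) (Fin d) ℂ) (δ : ℝ) :
    Matrix (Fin d) (Fin d) ℂ :=
  (List.ofFn fun l => NormedSpace.exp (((-(δ / 2) : ℝ) * Complex.I : ℂ) • h l)).prod *
    (List.ofFn fun l =>
      NormedSpace.exp (((-(δ / 2) : ℝ) * Complex.I : ℂ) • h l)).reverse.prod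

open scoped Nat
open Finset

theorem add_pow_div_factorial_eq_sum_antidiagonal {K : Type*} [Field K] [CharZero K] (x y : K)
    (n : ℕ) :
    (x + y) ^ n / n ! = ∑ p ∈ antidiagonal n, x ^ p.1 / p.1 ! * (y ^ p.2 / p.2 !) := by
  rw [(Commute.all x y).add_pow', sum_div]
  refine sum_congr rfl fun ⟨k, l⟩ hkl => ?_
  obtain rfl := mem_antidiagonal.mp hkl
  have hchoose : ((k + l).choose k * k ! * l ! : K) = (k + l)! := by
    have := Nat.choose_mul_factorial_mul_factorial (Nat.le_add_right k l)
    rw [Nat.add_sub_cancel_left] at this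
    exact_mod_cast this
  have hchoose_ne : ((k + l).choose k : K) ≠ 0 :=
    Nat.cast_ne_zero.mpr (Nat.choose_pos (Nat.le_add_right k l)).ne'
  rw [nsmul_eq_mul, ← hchoose]
  field_simp

theorem Real.tsum_pow_div_factorial_nat_add_le {x : ℝ} (hx : 0 ≤ x) (K : ℕ) :
    ∑' n, x ^ (n + K) / (n + K)! ≤ x ^ K / K ! * Real.exp x := by
  have hterm (n : ℕ) : x ^ (n + K) / (n + K)! ≤ x ^ K / K ! * (x ^ n / n !) := by
    have hfac : (K ! * n ! : ℝ) ≤ (n + K)! := by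
      rw [add_comm n K]
      exact_mod_cast Nat.le_of_dvd (Nat.factorial_pos _)
        (Nat.factorial_mul_factorial_dvd_factorial_add K n)
    calc x ^ (n + K) / (n + K)! ≤ x ^ (n + K) / (K ! * n !) := by gcongr
      _ = x ^ K / K ! * (x ^ n / n !) := by rw [pow_add]; ring
  rw [Real.exp_eq_exp_ℝ, NormedSpace.exp_eq_tsum_div, ← tsum_mul_left]
  exact (Real.summable_pow_div_factorial x).comp_injective (add_left_injective K)
    |>.tsum_le_tsum hterm ((Real.summable_pow_div_factorial x).mul_left _)

theorem Matrix.l2_opNorm_one_le {𝕜 n : Type*} [RCLike 𝕜] [Fintype n] [DecidableEq n] :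
    ‖(1 : Matrix n n 𝕜)‖ ≤ 1 := by
  rw [← l2_opNorm_toEuclideanCLM, map_one]
  exact ContinuousLinearMap.norm_id_le

theorem iteratedDeriv_eq_factorial_smul_of_hasSum_pow_smul {E : Type*} [NormedAddCommGroup E]
    [NormedSpace ℝ E] [CompleteSpace E] {f : ℝ → E} {c : ℕ → E}
    (hc : ∀ Δ : ℝ, Summable fun n => ‖Δ ^ n • c n‖)
    (hf : ∀ Δ : ℝ, HasSum (fun n => Δ ^ n • c n) (f Δ)) (n : ℕ) :
    iteratedDeriv n f 0 = n ! • c n := by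
  let p : FormalMultilinearSeries ℝ ℝ E := fun n => .mkPiRing ℝ (Fin n) (c n)
  have hp (k : ℕ) (Δ : ℝ) : (p k fun _ => Δ) = Δ ^ k • c k := by simp [p]
  have hradius : p.radius = ⊤ := by
    refine p.radius_eq_top_of_summable_norm fun t => (hc t).congr fun k => ?_
    simp [p, norm_smul, mul_comm]
  have hseries : HasFPowerSeriesOnBall f p 0 ⊤ :=
    ⟨hradius.ge, ENNReal.zero_lt_top, fun {Δ} _ => by simpa [hp] using hf Δ⟩
  rw [iteratedDeriv_eq_iteratedFDeriv, ← hseries.factorial_smul 1 n, hp, one_pow, one_smul]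

section ExpBounded

variable {A : Type*} [NormedRing A] [NormedAlgebra ℝ A]

def HasExpBoundedSeries (f : ℝ → A) (C r : ℝ) : Prop :=
  ∃ c : ℕ → A, (∀ n, ‖c n‖ ≤ C * (r ^ n / n !)) ∧
    ∀ Δ : ℝ, HasSum (fun n => Δ ^ n • c n) (f Δ)

theorem norm_pow_smul_le_of_norm_le {c : A} {C r : ℝ} {n : ℕ} (hc : ‖c‖ ≤ C * (r ^ n / n !))
    (Δ : ℝ) : ‖Δ ^ n • c‖ ≤ C * ((r * |Δ|) ^ n / n !) :=
  calc ‖Δ ^ n • c‖ = |Δ| ^ n * ‖c‖ := by rw [norm_smul, norm_pow, Real.norm_eq_abs]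
    _ ≤ |Δ| ^ n * (C * (r ^ n / n !)) := by gcongr
    _ = C * ((r * |Δ|) ^ n / n !) := by ring

theorem summable_norm_pow_smul_of_norm_le {c : ℕ → A} {C r : ℝ}
    (hc : ∀ n, ‖c n‖ ≤ C * (r ^ n / n !)) (Δ : ℝ) : Summable fun n => ‖Δ ^ n • c n‖ :=
  .of_nonneg_of_le (fun _ => norm_nonneg _) (fun n => norm_pow_smul_le_of_norm_le (hc n) Δ)
    ((Real.summable_pow_div_factorial _).mul_left C)

theorem hasExpBoundedSeries_one (h1 : ‖(1 : A)‖ ≤ 1) :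
    HasExpBoundedSeries (1 : ℝ → A) 1 0 := by
  refine ⟨Pi.single 0 1, fun n => ?_, fun Δ => ?_⟩
  · cases n <;> simp [h1]
  · exact (hasSum_pi_single 0 (1 : A)).congr_fun fun n => by cases n <;> simp

theorem hasExpBoundedSeries_exp_smul [CompleteSpace A] (h1 : ‖(1 : A)‖ ≤ 1) (a : A) :
    HasExpBoundedSeries (fun Δ : ℝ => NormedSpace.exp (Δ • a)) 1 ‖a‖ := by
  refine ⟨fun n => (n !⁻¹ : ℝ) • a ^ n, fun n => ?_, fun Δ => ?_⟩
  · have hpow : ‖a ^ n‖ ≤ ‖a‖ ^ n := by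
      cases n with
      | zero => simpa using h1
      | succ n => exact norm_pow_le' a n.succ_pos
    rw [norm_smul, norm_inv, Real.norm_natCast, one_mul, div_eq_inv_mul]
    gcongr
  · refine (NormedSpace.exp_series_hasSum_exp' (𝕂 := ℝ) (Δ • a)).congr_fun fun n => ?_
    rw [smul_pow, smul_comm]

namespace HasExpBoundedSeries

variable {f g : ℝ → A} {C C' r s : ℝ}

theorem nonneg (hf : HasExpBoundedSeries f C r) : 0 ≤ C := by
  obtain ⟨c, hc, -⟩ := hf
  simpa using (norm_nonneg _).trans (hc 0)

theorem mono (hf : HasExpBoundedSeries f C r) (hr : 0 ≤ r) (hrs : r ≤ s) :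
    HasExpBoundedSeries f C s := by
  have hC := hf.nonneg
  obtain ⟨c, hc, hsum⟩ := hf
  exact ⟨c, fun n => (hc n).trans (by gcongr), hsum⟩

theorem sub (hf : HasExpBoundedSeries f C r) (hg : HasExpBoundedSeries g C' r) :
    HasExpBoundedSeries (f - g) (C + C') r := by
  obtain ⟨a, ha, hfa⟩ := hf
  obtain ⟨b, hb, hgb⟩ := hg
  refine ⟨a - b, fun n => ?_, fun Δ => by simpa [smul_sub] using (hfa Δ).sub (hgb Δ)⟩
  calc ‖a n - b n‖ ≤ ‖a n‖ + ‖b n‖ := norm_sub_le _ _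
    _ ≤ (C + C') * (r ^ n / n !) := by rw [add_mul]; exact add_le_add (ha n) (hb n)

theorem mul [CompleteSpace A] (hf : HasExpBoundedSeries f C r)
    (hg : HasExpBoundedSeries g C' s) :
    HasExpBoundedSeries (f * g) (C * C') (r + s) := by
  obtain ⟨a, ha, hfa⟩ := hf
  obtain ⟨b, hb, hgb⟩ := hg
  refine ⟨fun n => ∑ p ∈ antidiagonal n, a p.1 * b p.2, fun n => ?_, fun Δ => ?_⟩
  · calc ‖∑ p ∈ antidiagonal n, a p.1 * b p.2‖
        ≤ ∑ p ∈ antidiagonal n, ‖a p.1‖ * ‖b p.2‖ :=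
          (norm_sum_le _ _).trans (sum_le_sum fun _ _ => norm_mul_le _ _)
      _ ≤ ∑ p ∈ antidiagonal n, C * (r ^ p.1 / p.1 !) * (C' * (s ^ p.2 / p.2 !)) :=
          sum_le_sum fun _ _ =>
            mul_le_mul (ha _) (hb _) (norm_nonneg _) ((norm_nonneg _).trans (ha _))
      _ = C * C' * ((r + s) ^ n / n !) := by
          rw [add_pow_div_factorial_eq_sum_antidiagonal, mul_sum]
          exact sum_congr rfl fun _ _ => by ring
  · have hna := summable_norm_pow_smul_of_norm_le ha Δ
    have hnb := summable_norm_pow_smul_of_norm_le hb Δ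
    have hcauchy :=
      (summable_norm_sum_mul_antidiagonal_of_summable_norm hna hnb).of_norm.hasSum
    rw [← tsum_mul_tsum_eq_tsum_sum_antidiagonal_of_summable_norm hna hnb, (hfa Δ).tsum_eq,
      (hgb Δ).tsum_eq] at hcauchy
    refine hcauchy.congr_fun fun n => ?_
    rw [smul_sum]
    refine sum_congr rfl fun p hp => ?_
    rw [smul_mul_smul_comm, ← pow_add, mem_antidiagonal.mp hp]

theorem pow [CompleteSpace A] (h1 : ‖(1 : A)‖ ≤ 1) (hf : HasExpBoundedSeries f C r) (k : ℕ) :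
    HasExpBoundedSeries (f ^ k) (C ^ k) (k * r) := by
  induction k with
  | zero => simpa using hasExpBoundedSeries_one h1
  | succ k ih =>
    convert ih.mul hf using 1
    · exact pow_succ f k
    · exact pow_succ C k
    · push_cast; ring

theorem norm_sub_sum_iteratedDeriv_le [CompleteSpace A] (hf : HasExpBoundedSeries f C r)
    (hr : 0 ≤ r) (K : ℕ) (Δ : ℝ) :
    ‖f Δ - ∑ n ∈ range K, (Δ ^ n / n ! : ℝ) • iteratedDeriv n f 0‖ ≤
      C * ((r * |Δ|) ^ K / K !) * Real.exp (r * |Δ|) := by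
  have hC := hf.nonneg
  obtain ⟨c, hc, hsum⟩ := hf
  have hderiv := iteratedDeriv_eq_factorial_smul_of_hasSum_pow_smul (E := A)
    (summable_norm_pow_smul_of_norm_le hc) hsum
  have hterm (n : ℕ) : (Δ ^ n / n ! : ℝ) • iteratedDeriv n f 0 = Δ ^ n • c n := by
    rw [hderiv, ← Nat.cast_smul_eq_nsmul ℝ, smul_smul, div_mul_cancel₀ _ (by positivity)]
  have htail := (hasSum_nat_add_iff' K).mpr (hsum Δ)
  have hmajor := ((Real.summable_pow_div_factorial (r * |Δ|)).comp_injective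
    (add_left_injective K)).hasSum.mul_left C
  simp only [hterm]
  calc _ ≤ C * ∑' n, (r * |Δ|) ^ (n + K) / (n + K)! :=
        htail.norm_le_of_bounded hmajor fun n => norm_pow_smul_le_of_norm_le (hc _) Δ
    _ ≤ C * ((r * |Δ|) ^ K / K ! * Real.exp (r * |Δ|)) := by
        gcongr
        exact Real.tsum_pow_div_factorial_nat_add_le (by positivity) K
    _ = C * ((r * |Δ|) ^ K / K !) * Real.exp (r * |Δ|) := by ring

end HasExpBoundedSeries

theorem hasExpBoundedSeries_list_prod [CompleteSpace A] (h1 : ‖(1 : A)‖ ≤ 1) {ι : Type*}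
    {F : ι → ℝ → A} {r : ι → ℝ} (hF : ∀ i, HasExpBoundedSeries (F i) 1 (r i)) (L : List ι) :
    HasExpBoundedSeries (L.map F).prod 1 (L.map r).sum := by
  induction L with
  | nil => simpa using hasExpBoundedSeries_one h1
  | cons i L ih =>
    rw [List.map_cons, List.prod_cons, List.map_cons, List.sum_cons, ← one_mul (1 : ℝ)]
    exact (hF i).mul ih

end ExpBounded

theorem hasExpBoundedSeries_exp_neg_mul_I_smul {A : Type*} [NormedRing A] [NormedAlgebra ℂ A]
    [CompleteSpace A] (h1 : ‖(1 : A)‖ ≤ 1) (H : A) :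
    HasExpBoundedSeries (fun Δ : ℝ => NormedSpace.exp ((-(Δ : ℂ) * Complex.I) • H)) 1 ‖H‖ := by
  have hscalar (Δ : ℝ) : (-(Δ : ℂ) * Complex.I) • H = Δ • (-Complex.I • H) := by
    rw [← Complex.coe_smul, smul_smul, neg_mul, mul_neg]
  simpa only [hscalar, norm_smul, norm_neg, Complex.norm_I, one_mul] using
    hasExpBoundedSeries_exp_smul h1 (-Complex.I • H)

theorem hasExpBoundedSeries_U2_div {d N : ℕ} (h : Fin N → Matrix (Fin d) (Fin d) ℂ) (c : ℝ) :
    HasExpBoundedSeries (fun Δ => U2 h (Δ / c)) 1 ((∑ l, ‖h l‖) / |c|) := by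
  let a (l : Fin N) : Matrix (Fin d) (Fin d) ℂ := ((-(2 * c)⁻¹ : ℝ) * Complex.I : ℂ) • h l
  let E (l : Fin N) (Δ : ℝ) : Matrix (Fin d) (Fin d) ℂ := NormedSpace.exp (Δ • a l)
  have hE (l : Fin N) : HasExpBoundedSeries (E l) 1 (‖h l‖ / (2 * |c|)) := by
    convert hasExpBoundedSeries_exp_smul Matrix.l2_opNorm_one_le (a l) using 1
    simp [a, norm_smul, div_eq_inv_mul]
  have hU2 : (fun Δ => U2 h (Δ / c)) =
      ((List.finRange N).map E).prod * ((List.finRange N).reverse.map E).prod := by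
    funext Δ
    have hfactor (l : Fin N) : ((-(Δ / c / 2) : ℝ) * Complex.I : ℂ) • h l = Δ • a l := by
      rw [← Complex.coe_smul, smul_smul]
      congr 1
      push_cast
      ring
    simp only [U2, hfactor]
    simp [E, List.ofFn_eq_map, Pi.list_prod_apply, List.map_reverse, Function.comp_def]
  have hsum : ((List.finRange N).map fun l => ‖h l‖ / (2 * |c|)).sum =
      (∑ l, ‖h l‖) / (2 * |c|) := by
    rw [← List.ofFn_eq_map, List.sum_ofFn, sum_div]
  rw [hU2]
  convert (hasExpBoundedSeries_list_prod Matrix.l2_opNorm_one_le hE _).mul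
    (hasExpBoundedSeries_list_prod Matrix.l2_opNorm_one_le hE _) using 1
  · simp
  · rw [List.map_reverse, List.sum_reverse, hsum]
    ring

theorem product_formula_taylor_remainder {d N : ℕ}
    (h : Fin N → Matrix (Fin d) (Fin d) ℂ)
    (H : Matrix (Fin d) (Fin d) ℂ) (hH : H = ∑ l, h l)
    (lam : ℝ) (hlam : lam = ∑ l, ‖h l‖)
    (j m : ℕ)
    (f : ℝ → Matrix (Fin d) (Fin d) ℂ)
    (hf : ∀ Δ : ℝ, f Δ = (U2 h (Δ / j)) ^ j -
      NormedSpace.exp ((-(Δ : ℂ) * Complex.I) • H)) :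
    ∀ Δ : ℝ,
      ‖f Δ - ∑ n ∈ Finset.range (2 * m + 1),
          ((Δ ^ n / n.factorial : ℝ)) • iteratedDeriv n f 0‖
        ≤ 2 * (lam * |Δ|) ^ (2 * m + 1) / (2 * m + 1).factorial *
          Real.exp (lam * |Δ|) := by
  have hlam0 : 0 ≤ lam := hlam ▸ sum_nonneg fun _ _ => norm_nonneg _
  have hradius : (j : ℝ) * (lam / |(j : ℝ)|) ≤ lam := by
    rcases j.eq_zero_or_pos with rfl | hj
    · simpa using hlam0
    · rw [Nat.abs_cast, mul_div_cancel₀ _ (by positivity)]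
  have hTrotter : HasExpBoundedSeries ((fun Δ => U2 h (Δ / j)) ^ j) 1 lam := by
    have hU2 := hasExpBoundedSeries_U2_div h j
    rw [← hlam] at hU2
    simpa only [one_pow] using (hU2.pow Matrix.l2_opNorm_one_le j).mono (by positivity) hradius
  have hExact : HasExpBoundedSeries (fun Δ : ℝ => NormedSpace.exp ((-(Δ : ℂ) * Complex.I) • H))
      1 lam :=
    (hasExpBoundedSeries_exp_neg_mul_I_smul Matrix.l2_opNorm_one_le H).mono (norm_nonneg _)
      (hH ▸ hlam ▸ norm_sum_le _ _)
  have hf' : f = (fun Δ => U2 h (Δ / j)) ^ j -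
      fun Δ : ℝ => NormedSpace.exp ((-(Δ : ℂ) * Complex.I) • H) := funext hf
  intro Δ
  have := (hTrotter.sub hExact).norm_sub_sum_iteratedDeriv_le hlam0 (2 * m + 1) Δ
  rw [← hf', one_add_one_eq_two] at this
  convert this using 1
  ring
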